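/- Let f : X → X be a homeomorphism of a compact connected metric space with L-shadowing on X and int(CR(f)) ≠ ∅. Then f is a mixing homeomorphism. -/

import Mathlib

open Metric Filter Topology Set

variable {X : Type*}

/-- `(c i)_{i=0}^k` is a `δ`-chain of `f` (up to index `k`). -/
def IsDeltaChain [MetricSpace X] (f : X → X) (δ : ℝ) (k : ℕ) (c : ℕ → X) : Prop :=
  ∀ i < k, dist (f (c i)) (c (i + 1)) ≤ δ

/-- `x → y` : for every `δ > 0` there is a `δ`-chain from `x` to `y`. -/
def ChainReach [MetricSpace X] (f : X → X) (x y : X) : Prop :=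
  ∀ δ > 0, ∃ k ≥ 1, ∃ c : ℕ → X, c 0 = x ∧ c k = y ∧ IsDeltaChain f δ k c

/-- The chain recurrent set. -/
def ChainRec [MetricSpace X] (f : X → X) : Set X := {x | ChainReach f x x}

/-- `C` is a chain component of `f`. -/
def IsChainComponent [MetricSpace X] (f : X → X) (C : Set X) : Prop :=
  ∃ x, ChainReach f x x ∧
    C = {y | ChainReach f y y ∧ ChainReach f x y ∧ ChainReach f y x}

/-- A set is chain stable iff points chain-reachable from it stay in it. -/
def ChainStable [MetricSpace X] (f : X → X) (S : Set X) : Prop :=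
  ∀ x ∈ S, ∀ y, ChainReach f x y → y ∈ S

/-- `S` is "initially stable": if `y → x` with `x ∈ S` then `y ∈ S`. -/
def InitialStable [MetricSpace X] (f : X → X) (S : Set X) : Prop :=
  ∀ x ∈ S, ∀ y, ChainReach f y x → y ∈ S

/-- `f` restricted to `Λ` is chain transitive. -/
def ChainTransitiveOn [MetricSpace X] (f : X → X) (Λ : Set X) : Prop :=
  ∀ p ∈ Λ, ∀ q ∈ Λ, ∀ δ > 0, ∃ k ≥ 1, ∃ c : ℕ → X,
    c 0 = p ∧ c k = q ∧ (∀ i ≤ k, c i ∈ Λ) ∧ IsDeltaChain f δ k c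

/-- `f` has shadowing on `S`. -/
def ShadowsOn [MetricSpace X] (f : X → X) (S : Set X) : Prop :=
  ∀ ε > 0, ∃ δ > 0, ∀ (k : ℕ) (c : ℕ → X), (∀ i ≤ k, c i ∈ S) →
    IsDeltaChain f δ k c → ∃ x, ∀ i ≤ k, dist (c i) (f^[i] x) ≤ ε

/-- Iterate of a homeomorphism indexed by `ℤ`. -/
def hIter [TopologicalSpace X] (f : X ≃ₜ X) (i : ℤ) : X → X :=
  if 0 ≤ i then (⇑f)^[i.toNat] else (⇑f.symm)^[(-i).toNat]

/-- A `δ`-limit-pseudo orbit of the homeomorphism `f`. -/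
def IsLimitPseudoOrbit [MetricSpace X] (f : X ≃ₜ X) (δ : ℝ) (ξ : ℤ → X) : Prop :=
  (∀ i : ℤ, dist (f (ξ i)) (ξ (i + 1)) ≤ δ) ∧
  Tendsto (fun i : ℤ => dist (f (ξ i)) (ξ (i + 1))) atBot (nhds 0) ∧
  Tendsto (fun i : ℤ => dist (f (ξ i)) (ξ (i + 1))) atTop (nhds 0)

/-- `f` has L-shadowing on `S`. -/
def LShadowsOn [MetricSpace X] (f : X ≃ₜ X) (S : Set X) : Prop :=
  ∀ ε > 0, ∃ δ > 0, ∀ ξ : ℤ → X, (∀ i : ℤ, ξ i ∈ S) →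
    IsLimitPseudoOrbit f δ ξ →
    ∃ x : X, (∀ i : ℤ, dist (ξ i) (hIter f i x) ≤ ε) ∧
      Tendsto (fun i : ℤ => dist (ξ i) (hIter f i x)) atBot (nhds 0) ∧
      Tendsto (fun i : ℤ => dist (ξ i) (hIter f i x)) atTop (nhds 0)

/-- `f` is expansive on `S`. -/
def ExpansiveOn [MetricSpace X] (f : X ≃ₜ X) (S : Set X) : Prop :=
  ∃ e > 0, ∀ x y : X, (∀ i : ℤ, hIter f i x ∈ S) → (∀ i : ℤ, hIter f i y ∈ S) →
    (∀ i : ℤ, dist (hIter f i x) (hIter f i y) ≤ e) → x = y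

/-- Closed `b`-neighborhood of `S`. -/
def Nbhd [MetricSpace X] (b : ℝ) (S : Set X) : Set X := {x | Metric.infDist x S ≤ b}

/-- Attractor for a continuous map `f`. -/
def IsAttractor [TopologicalSpace X] (f : X → X) (Λ : Set X) : Prop :=
  IsClosed Λ ∧ f '' Λ = Λ ∧
    ∃ U : Set X, IsOpen U ∧ f '' closure U ⊆ U ∧ Λ = ⋂ i : ℕ, f^[i] '' U

/-- `f` is (topologically) mixing. -/
def IsMixing [TopologicalSpace X] (f : X → X) : Prop :=
  ∀ U V : Set X, IsOpen U → IsOpen V → U.Nonempty → V.Nonempty →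
    ∃ j : ℕ, ∀ i ≥ j, (f^[i] '' U ∩ V).Nonempty

/-- The ω-limit set of `x` under `f`. -/
def OmegaSet [TopologicalSpace X] (f : X → X) (x : X) : Set X :=
  {y | ∃ φ : ℕ → ℕ, StrictMono φ ∧ Tendsto (fun j => f^[φ j] x) atTop (nhds y)}

/-- `M` is a minimal set for `f`. -/
def IsMinimalSet [TopologicalSpace X] (f : X → X) (M : Set X) : Prop :=
  M.Nonempty ∧ IsClosed M ∧ f '' M ⊆ M ∧ ∀ x ∈ M, OmegaSet f x = M


/-!
L-shadowing glues the backward orbit of `a`, a finite `δ`-chain from `a` to `b` and the forward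
orbit of `b` into one limit pseudo-orbit, whose shadow is asymptotic to `a` in the past and to `b`
in the future. A point whose forward (backward) orbit is asymptotic to that of a chain recurrent
point `z` chain-reaches `z` (is chain-reached from `z`). Hence nearby chain recurrent points are
chain related, and every point close to the chain class `C` of a point of `int CR(f)` lies in `C`.
So `C` is clopen, hence all of `X`, and `f` is chain transitive. If the lengths of the `δ`-cycles
at `p` had a common divisor `d > 1`, the lengths modulo `d` of `δ/2`-chains from `p` would split
`X` into disjoint open sets; so every large integer is such a length, and shadowing such a cycle
followed by a chain to a second open set gives mixing.
-/

open Function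

section Iterates
variable [TopologicalSpace X] (f : X ≃ₜ X)

lemma hIter_natCast (n : ℕ) : hIter f n = (⇑f)^[n] := by
  simp [hIter]

lemma hIter_neg_natCast (n : ℕ) : hIter f (-n) = (⇑f.symm)^[n] := by
  rcases n.eq_zero_or_pos with rfl | hn
  · simp [hIter]
  · simp [hIter, hn.ne']

end Iterates

section Chains
variable [MetricSpace X] {f : X → X} {δ η : ℝ} {k l n : ℕ} {a b y : X}

def HasChain (f : X → X) (δ : ℝ) (k : ℕ) (a b : X) : Prop :=
  ∃ c : ℕ → X, c 0 = a ∧ c k = b ∧ IsDeltaChain f δ k c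

lemma HasChain.mono (h : HasChain f δ k a b) (hδη : δ ≤ η) : HasChain f η k a b :=
  let ⟨c, hc0, hck, hc⟩ := h
  ⟨c, hc0, hck, fun i hi => (hc i hi).trans hδη⟩

lemma hasChain_iterate (hδ : 0 ≤ δ) (a : X) (k : ℕ) : HasChain f δ k a (f^[k] a) :=
  ⟨fun i => f^[i] a, rfl, rfl, fun i _ => by simp [iterate_succ_apply', hδ]⟩

lemma HasChain.append (h₁ : HasChain f δ k a b) (h₂ : HasChain f δ l b y) :
    HasChain f δ (k + l) a y := by
  obtain ⟨c, hc0, hck, hc⟩ := h₁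
  obtain ⟨e, he0, hel, he⟩ := h₂
  refine ⟨fun i => if i ≤ k then c i else e (i - k), by simp [hc0], ?_, fun i hi => ?_⟩
  · rcases l.eq_zero_or_pos with rfl | hl
    · simp [hck, ← he0, hel]
    · simp [show ¬ k + l ≤ k by omega, hel]
  · rcases lt_or_ge i k with hik | hik
    · simpa [hik.le, Nat.succ_le_of_lt hik] using hc i hik
    · have hv : (if i ≤ k then c i else e (i - k)) = e (i - k) := by
        split_ifs with h
        · rw [show i = k by omega, hck, ← he0, Nat.sub_self]
        · rfl
      simpa [hv, show ¬ i + 1 ≤ k by omega, show i + 1 - k = i - k + 1 by omega] using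
        he (i - k) (by omega)

lemma HasChain.perturb_last (h : HasChain f δ k a b) (hk : k ≠ 0) (y : X) :
    HasChain f (δ + dist b y) k a y := by
  obtain ⟨c, hc0, hck, hc⟩ := h
  refine ⟨update c k y, by rw [update_of_ne hk.symm, hc0], update_self .., fun i hi => ?_⟩
  rw [update_of_ne hi.ne]
  rcases eq_or_ne (i + 1) k with hik | hik
  · rw [← hik, update_self]
    calc dist (f (c i)) y ≤ dist (f (c i)) (c (i + 1)) + dist (c (i + 1)) y := dist_triangle ..
      _ ≤ δ + dist b y := by rw [← hck, ← hik]; exact add_le_add (hc i hi) le_rfl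
  · rw [update_of_ne hik]
    exact (hc i hi).trans (le_add_of_nonneg_right dist_nonneg)

lemma HasChain.perturb_first (h : HasChain f δ k a b) (hk : k ≠ 0) (x : X) :
    HasChain f (δ + dist (f x) (f a)) k x b := by
  obtain ⟨c, hc0, hck, hc⟩ := h
  refine ⟨update c 0 x, update_self .., by rw [update_of_ne hk, hck], fun i hi => ?_⟩
  rw [update_of_ne i.succ_ne_zero]
  rcases eq_or_ne i 0 with rfl | hi0
  · rw [update_self]
    calc dist (f x) (c 1) ≤ dist (f x) (f a) + dist (f a) (c 1) := dist_triangle ..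
      _ ≤ δ + dist (f x) (f a) := by rw [add_comm, ← hc0]; exact add_le_add (hc 0 hi) le_rfl
  · rw [update_of_ne hi0]
    exact (hc i hi).trans (le_add_of_nonneg_right dist_nonneg)

lemma ChainReach.trans (h₁ : ChainReach f a b) (h₂ : ChainReach f b y) : ChainReach f a y :=
  fun δ hδ =>
    let ⟨k, hk, hc⟩ := h₁ δ hδ
    let ⟨l, _, he⟩ := h₂ δ hδ
    ⟨k + l, by omega, HasChain.append hc he⟩

lemma chainReach_iterate (hn : n ≠ 0) (a : X) : ChainReach f a (f^[n] a) :=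
  fun _ hδ => ⟨n, Nat.one_le_iff_ne_zero.mpr hn, hasChain_iterate hδ.le a n⟩

variable (hf : UniformContinuous f)
include hf

lemma chainReach_of_forall_hasChain_near
    (h : ∀ γ > 0, ∃ a' b' k,
      k ≠ 0 ∧ dist a a' ≤ γ ∧ dist b' b ≤ γ ∧ HasChain f γ k a' b') :
    ChainReach f a b := by
  intro δ hδ
  obtain ⟨γ₀, hγ₀, hfγ₀⟩ := Metric.uniformContinuous_iff_le.mp hf (δ / 3) (by positivity)
  obtain ⟨a', b', k, hk, ha, hb, hc⟩ := h (min γ₀ (δ / 3)) (by positivity)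
  have hfa := hfγ₀ (ha.trans (min_le_left ..))
  refine ⟨k, Nat.one_le_iff_ne_zero.mpr hk, ((hc.perturb_last hk b).perturb_first hk a).mono ?_⟩
  linarith [min_le_right γ₀ (δ / 3)]

lemma isClosed_setOf_chainReach : IsClosed {q : X × X | ChainReach f q.1 q.2} := by
  refine isClosed_of_closure_subset fun q hq =>
    chainReach_of_forall_hasChain_near hf fun γ hγ => ?_
  obtain ⟨q', hq', hqq'⟩ := Metric.mem_closure_iff.mp hq γ hγ
  obtain ⟨k, hk, hc⟩ := hq' γ hγ
  rw [Prod.dist_eq, max_lt_iff] at hqq'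
  exact ⟨q'.1, q'.2, k, by omega, hqq'.1.le, by rw [dist_comm]; exact hqq'.2.le, hc⟩

lemma ChainReach.map (h : ChainReach f a b) : ChainReach f (f a) (f b) := by
  intro δ hδ
  obtain ⟨γ, hγ, hfγ⟩ := Metric.uniformContinuous_iff_le.mp hf δ hδ
  obtain ⟨k, hk, c, hc0, hck, hc⟩ := h γ hγ
  exact ⟨k, hk, f ∘ c, by simp [hc0], by simp [hck], fun i hi => hfγ (hc i hi)⟩

lemma ChainReach.map_iterate (h : ChainReach f a b) (n : ℕ) :
    ChainReach f (f^[n] a) (f^[n] b) := by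
  induction n with
  | zero => exact h
  | succ n ih => simpa only [iterate_succ_apply'] using ih.map hf

lemma chainReach_apply_self (ha : a ∈ ChainRec f) : ChainReach f (f a) a := by
  refine chainReach_of_forall_hasChain_near hf fun γ hγ => ?_
  obtain ⟨k, hk, c, hc0, hck, hc⟩ := ha γ hγ
  have h01 : dist (f a) (c 1) ≤ γ := hc0 ▸ hc 0 (by omega)
  rcases eq_or_lt_of_le hk with rfl | hk
  · exact ⟨a, a, 1, one_ne_zero, hck ▸ h01, by simpa using hγ.le, c, hc0, hck, hc⟩
  · refine ⟨c 1, a, k - 1, by omega, h01, by simpa using hγ.le, fun i => c (i + 1), rfl,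
      show c (k - 1 + 1) = a by rw [Nat.sub_add_cancel hk.le, hck], fun i hi => hc _ (by omega)⟩

lemma chainReach_iterate_apply_self (ha : a ∈ ChainRec f) (n : ℕ) :
    ChainReach f (f^[n] a) a := by
  induction n with
  | zero => exact ha
  | succ n ih =>
    rw [iterate_succ_apply]
    exact ((chainReach_apply_self hf ha).map_iterate hf n).trans ih

lemma chainReach_of_tendsto_dist_iterate (hb : b ∈ ChainRec f)
    (h : Tendsto (fun n => dist (f^[n] a) (f^[n] b)) atTop (𝓝 0)) : ChainReach f a b := by
  intro δ hδ
  obtain ⟨n, hn, hn0⟩ := ((h.eventually (gt_mem_nhds hδ)).and (eventually_ne_atTop 0)).exists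
  obtain ⟨m, hm, hc⟩ := chainReach_iterate_apply_self hf hb n δ hδ
  refine ⟨n + m, by omega, HasChain.append ?_ hc⟩
  exact ((hasChain_iterate le_rfl a n).perturb_last hn0 _).mono (by linarith)

end Chains

section Homeomorph
variable [MetricSpace X] [CompactSpace X] {f : X ≃ₜ X} {a b : X} {n : ℕ}

lemma ChainReach.to_symm (h : ChainReach f a b) : ChainReach f.symm b a := by
  intro δ hδ
  obtain ⟨γ, hγ, hfγ⟩ := Metric.uniformContinuous_iff_le.mp
    (CompactSpace.uniformContinuous_of_continuous f.symm.continuous) δ hδ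
  obtain ⟨k, hk, c, hc0, hck, hc⟩ := h γ hγ
  refine ⟨k, hk, fun i => c (k - i), by simpa using hck, by simpa using hc0, fun i hi => ?_⟩
  have := hfγ (hc (k - (i + 1)) (by omega))
  rwa [f.symm_apply_apply, show k - (i + 1) + 1 = k - i by omega, dist_comm] at this

lemma chainReach_symm_iterate (hn : n ≠ 0) (a : X) : ChainReach f (f.symm^[n] a) a := by
  simpa using (chainReach_iterate (f := f.symm) hn a).to_symm

lemma chainReach_symm_iterate_self (ha : a ∈ ChainRec f) (n : ℕ) :
    ChainReach f a (f.symm^[n] a) := by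
  have hf := CompactSpace.uniformContinuous_of_continuous f.symm.continuous
  simpa using (chainReach_iterate_apply_self hf (ChainReach.to_symm ha) n).to_symm

lemma chainReach_of_tendsto_dist_symm_iterate (ha : a ∈ ChainRec f)
    (h : Tendsto (fun n => dist (f.symm^[n] b) (f.symm^[n] a)) atTop (𝓝 0)) :
    ChainReach f a b := by
  have hf := CompactSpace.uniformContinuous_of_continuous f.symm.continuous
  simpa using (chainReach_of_tendsto_dist_iterate hf (ChainReach.to_symm ha) h).to_symm

end Homeomorph

section OrbitExtension
variable [MetricSpace X] (f : X ≃ₜ X) (c : ℕ → X) (K : ℕ)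

def orbitExtension (i : ℤ) : X :=
  if i < 0 then f.symm^[(-i).toNat] (c 0) else if i ≤ K then c i.toNat else f^[(i - K).toNat] (c K)

lemma orbitExtension_neg_natCast (n : ℕ) : orbitExtension f c K (-n) = f.symm^[n] (c 0) := by
  rcases n.eq_zero_or_pos with rfl | hn
  · simp [orbitExtension]
  · simp [orbitExtension, hn]

lemma orbitExtension_natCast {i : ℕ} (hi : i ≤ K) : orbitExtension f c K i = c i := by
  simp [orbitExtension, hi]

lemma orbitExtension_add_natCast (n : ℕ) :
    orbitExtension f c K ((K + n : ℕ) : ℤ) = f^[n] (c K) := by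
  unfold orbitExtension
  rw [if_neg (by omega)]
  split_ifs with h
  · obtain rfl : n = 0 := by omega
    simp
  · congr
    omega

variable {f c K}

lemma orbitExtension_add_one {i : ℤ} (hi : i < 0 ∨ K ≤ i) :
    orbitExtension f c K (i + 1) = f (orbitExtension f c K i) := by
  rcases hi with hi | hi
  · obtain ⟨n, rfl⟩ : ∃ n : ℕ, i = -((n + 1 : ℕ) : ℤ) := ⟨(-i - 1).toNat, by omega⟩
    rw [show -((n + 1 : ℕ) : ℤ) + 1 = -(n : ℤ) by push_cast; ring, orbitExtension_neg_natCast,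
      orbitExtension_neg_natCast, iterate_succ_apply', f.apply_symm_apply]
  · obtain ⟨n, rfl⟩ : ∃ n : ℕ, i = ((K + n : ℕ) : ℤ) := ⟨(i - K).toNat, by omega⟩
    rw [show ((K + n : ℕ) : ℤ) + 1 = ((K + (n + 1) : ℕ) : ℤ) by push_cast; ring,
      orbitExtension_add_natCast, orbitExtension_add_natCast, iterate_succ_apply']

lemma isLimitPseudoOrbit_orbitExtension {δ : ℝ} (hδ : 0 ≤ δ) (hc : IsDeltaChain f δ K c) :
    IsLimitPseudoOrbit f δ (orbitExtension f c K) := by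
  have hzero : ∀ i : ℤ, i < 0 ∨ K ≤ i →
      dist (f (orbitExtension f c K i)) (orbitExtension f c K (i + 1)) = 0 := fun i hi => by
    rw [orbitExtension_add_one hi, dist_self]
  refine ⟨fun i => ?_, tendsto_const_nhds.congr' ?_, tendsto_const_nhds.congr' ?_⟩
  · by_cases hi : i < 0 ∨ K ≤ i
    · exact (hzero i hi).le.trans hδ
    · rw [not_or, not_lt, not_le] at hi
      lift i to ℕ using hi.1
      rw [show (i : ℤ) + 1 = ((i + 1 : ℕ) : ℤ) by push_cast; ring,
        orbitExtension_natCast f c K (by omega), orbitExtension_natCast f c K (by omega)]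
      exact hc i (by omega)
  · exact eventually_atBot.mpr ⟨-1, fun i hi => (hzero i (Or.inl (by omega))).symm⟩
  · exact eventually_atTop.mpr ⟨K, fun i hi => (hzero i (Or.inr hi)).symm⟩

end OrbitExtension

section LShadowing
variable [MetricSpace X] {f : X ≃ₜ X}

lemma LShadowsOn.exists_asymptotic_shadow (hL : LShadowsOn f univ) {ε : ℝ} (hε : 0 < ε) :
    ∃ δ > 0, ∀ (K : ℕ) (c : ℕ → X), IsDeltaChain f δ K c → ∃ z,
      (∀ i ≤ K, dist (c i) (f^[i] z) ≤ ε) ∧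
      Tendsto (fun n => dist (f.symm^[n] (c 0)) (f.symm^[n] z)) atTop (𝓝 0) ∧
      Tendsto (fun n => dist (f^[n] (c K)) (f^[n] (f^[K] z))) atTop (𝓝 0) := by
  obtain ⟨δ, hδ, hsh⟩ := hL ε hε
  refine ⟨δ, hδ, fun K c hc => ?_⟩
  obtain ⟨z, hz, hzbot, hztop⟩ :=
    hsh _ (fun _ => mem_univ _) (isLimitPseudoOrbit_orbitExtension hδ.le hc)
  refine ⟨z, fun i hi => ?_, ?_, ?_⟩
  · simpa [orbitExtension_natCast f c K hi, hIter_natCast] using hz i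
  · have := hzbot.comp (tendsto_neg_atTop_atBot.comp tendsto_natCast_atTop_atTop)
    simpa [comp_def, orbitExtension_neg_natCast, hIter_neg_natCast] using this
  · have := hztop.comp (tendsto_natCast_atTop_atTop.comp (tendsto_add_atTop_nat K))
    refine this.congr fun n => ?_
    simp only [comp_apply]
    rw [add_comm n K, orbitExtension_add_natCast, hIter_natCast, add_comm, iterate_add_apply]

lemma LShadowsOn.shadowsOn (hL : LShadowsOn f univ) : ShadowsOn f univ := fun _ hε =>
  let ⟨δ, hδ, h⟩ := hL.exists_asymptotic_shadow hε
  ⟨δ, hδ, fun K c _ hc => (h K c hc).imp fun _ hz => hz.1⟩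

end LShadowing

def chainClass [MetricSpace X] (f : X → X) (p : X) : Set X :=
  {v | ChainReach f p v ∧ ChainReach f v p}

lemma mem_chainRec_of_mem_chainClass [MetricSpace X] {f : X → X} {p v : X}
    (hv : v ∈ chainClass f p) : v ∈ ChainRec f :=
  hv.2.trans hv.1

section ChainClass
variable [MetricSpace X] [CompactSpace X] {f : X ≃ₜ X} {p v : X}

lemma isClosed_chainClass : IsClosed (chainClass f p) := by
  have hR := isClosed_setOf_chainReach (CompactSpace.uniformContinuous_of_continuous f.continuous)
  exact (hR.preimage (by fun_prop : Continuous fun v => (p, v))).inter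
    (hR.preimage (by fun_prop : Continuous fun v => (v, p)))

lemma iterate_mem_chainClass (hv : v ∈ chainClass f p) (n : ℕ) : f^[n] v ∈ chainClass f p := by
  rcases eq_or_ne n 0 with rfl | hn
  · exact hv
  · have hf := CompactSpace.uniformContinuous_of_continuous f.continuous
    exact ⟨hv.1.trans (chainReach_iterate hn v),
      (chainReach_iterate_apply_self hf (mem_chainRec_of_mem_chainClass hv) n).trans hv.2⟩

lemma symm_iterate_mem_chainClass (hv : v ∈ chainClass f p) (n : ℕ) :
    f.symm^[n] v ∈ chainClass f p := by
  rcases eq_or_ne n 0 with rfl | hn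
  · exact hv
  · exact ⟨hv.1.trans (chainReach_symm_iterate_self (mem_chainRec_of_mem_chainClass hv) n),
      (chainReach_symm_iterate hn v).trans hv.2⟩

variable (hL : LShadowsOn f univ)
include hL

lemma LShadowsOn.exists_chainReach_of_dist_le :
    ∃ δ₀ > 0, ∀ x ∈ ChainRec f, ∀ y ∈ ChainRec f, dist x y ≤ δ₀ → ChainReach f x y := by
  have hf := CompactSpace.uniformContinuous_of_continuous f.continuous
  obtain ⟨δ, hδ, hsh⟩ := hL.exists_asymptotic_shadow one_pos
  obtain ⟨δ₀, hδ₀, hfδ₀⟩ := Metric.uniformContinuous_iff_le.mp hf δ hδ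
  refine ⟨δ₀, hδ₀, fun x hx y hy hxy => ?_⟩
  obtain ⟨c, hc0, hc1, hc⟩ :=
    ((hasChain_iterate le_rfl x 1).perturb_last one_ne_zero (f y)).mono (by simpa using hfδ₀ hxy)
  obtain ⟨z, -, hback, hfwd⟩ := hsh 1 c hc
  rw [hc0] at hback
  rw [hc1] at hfwd
  have hxz : ChainReach f x z :=
    chainReach_of_tendsto_dist_symm_iterate hx (hback.congr fun n => dist_comm ..)
  have hzy : ChainReach f z y := by
    refine chainReach_of_tendsto_dist_iterate hf hy ((tendsto_add_atTop_iff_nat 1).mp ?_)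
    refine hfwd.congr fun n => ?_
    rw [iterate_one, dist_comm, iterate_succ_apply, iterate_succ_apply]
  exact hxz.trans hzy

lemma LShadowsOn.isOpen_chainClass {ε : ℝ} (hε : 0 < ε)
    (hball : closedBall p ε ⊆ chainClass f p) : IsOpen (chainClass f p) := by
  have hf := CompactSpace.uniformContinuous_of_continuous f.continuous
  obtain ⟨δ, hδ, hsh⟩ := hL.exists_asymptotic_shadow hε
  obtain ⟨r, hr, hfr⟩ := Metric.uniformContinuous_iff_le.mp hf (δ / 2) (by positivity)
  refine Metric.isOpen_iff.mpr fun x hx => ⟨min r (δ / 2), by positivity, fun y hy => ?_⟩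
  have hyx : dist y x ≤ min r (δ / 2) := (mem_ball.mp hy).le
  constructor
  -- the shadow `z` of a chain from `y` to `p` lies in `C` and is backward asymptotic to `y`
  · obtain ⟨K, hK, hc⟩ := hx.2 (δ / 2) (by positivity)
    have hyp : HasChain f δ K y p :=
      (HasChain.perturb_first hc (by omega) y).mono
        (by linarith [hfr (hyx.trans (min_le_left ..))])
    obtain ⟨c, hc0, hcK, hchain⟩ := hyp
    obtain ⟨z, hz, hback, -⟩ := hsh K c hchain
    have hzK : f^[K] z ∈ chainClass f p :=
      hball (by rw [mem_closedBall, dist_comm, ← hcK]; exact hz K le_rfl)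
    have hzC : z ∈ chainClass f p := by
      simpa [LeftInverse.iterate f.symm_apply_apply K z] using symm_iterate_mem_chainClass hzK K
    exact hzC.1.trans (chainReach_of_tendsto_dist_symm_iterate
      (mem_chainRec_of_mem_chainClass hzC) (hc0 ▸ hback))
  -- the shadow `z` of a chain from `p` to `y` lies in `C`, and `f^[K] z` is forward asymptotic
  -- to `y`
  · obtain ⟨K, hK, hc⟩ := hx.1 (δ / 2) (by positivity)
    have hpy : HasChain f δ K p y :=
      (HasChain.perturb_last hc (by omega) y).mono
        (by linarith [dist_comm x y, min_le_right r (δ / 2)])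
    obtain ⟨c, hc0, hcK, hchain⟩ := hpy
    obtain ⟨z, hz, -, hfwd⟩ := hsh K c hchain
    have hzC : z ∈ chainClass f p :=
      hball (by simpa [mem_closedBall, dist_comm, ← hc0] using hz 0 K.zero_le)
    have hzK := iterate_mem_chainClass hzC K
    exact (chainReach_of_tendsto_dist_iterate hf (mem_chainRec_of_mem_chainClass hzK)
      (hcK ▸ hfwd)).trans hzK.2

theorem LShadowsOn.chainReach [ConnectedSpace X] (hint : (interior (ChainRec f)).Nonempty)
    (a b : X) : ChainReach f a b := by
  obtain ⟨p, hp⟩ := hint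
  have hpCR : p ∈ ChainRec f := interior_subset hp
  obtain ⟨s, hs, hsub⟩ := Metric.isOpen_iff.mp isOpen_interior p hp
  obtain ⟨δ₀, hδ₀, hnear⟩ := hL.exists_chainReach_of_dist_le
  have hball : closedBall p (min (s / 2) δ₀) ⊆ chainClass f p := fun w hw => by
    have hwp : dist w p ≤ min (s / 2) δ₀ := hw
    have hwCR : w ∈ ChainRec f :=
      interior_subset (hsub (mem_ball.mpr (by linarith [min_le_left (s / 2) δ₀])))
    exact ⟨hnear p hpCR w hwCR (by rw [dist_comm]; exact hwp.trans (min_le_right ..)),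
      hnear w hwCR p hpCR (hwp.trans (min_le_right ..))⟩
  have huniv : chainClass f p = univ :=
    IsClopen.eq_univ ⟨isClosed_chainClass, hL.isOpen_chainClass (by positivity) hball⟩
      ⟨p, hpCR, hpCR⟩
  have ha : a ∈ chainClass f p := huniv ▸ mem_univ a
  have hb : b ∈ chainClass f p := huniv ▸ mem_univ b
  exact ha.2.trans hb.1

end ChainClass

section ChainMixing
variable [MetricSpace X] {f : X → X} {δ : ℝ}

def cycleLengths (f : X → X) (δ : ℝ) (p : X) : AddSubmonoid ℕ where
  carrier := {n | HasChain f δ n p p}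
  zero_mem' := ⟨fun _ => p, rfl, rfl, fun _ hi => absurd hi (Nat.not_lt_zero _)⟩
  add_mem' := HasChain.append

variable [PreconnectedSpace X] (htrans : ∀ a b, ChainReach f a b)
include htrans

lemma setGcd_cycleLengths (p : X) (hδ : 0 < δ) : Nat.setGcd (cycleLengths f δ p) = 1 := by
  set d := Nat.setGcd (cycleLengths f δ p)
  have hcycle : ∀ {k}, HasChain f δ k p p → (k : ZMod d) = 0 := fun h =>
    (ZMod.natCast_eq_zero_iff _ _).mpr (Nat.setGcd_dvd_of_mem h)
  let W : ZMod d → Set X := fun r =>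
    thickening (δ / 2) {y | ∃ k : ℕ, k ≠ 0 ∧ (k : ZMod d) = r ∧ HasChain f (δ / 2) k p y}
  have hW : ∀ {k : ℕ} {y : X}, k ≠ 0 → HasChain f (δ / 2) k p y → y ∈ W k := fun hk h =>
    mem_thickening_iff.mpr ⟨_, ⟨_, hk, rfl, h⟩, by rw [dist_self]; exact half_pos hδ⟩
  have hcover : ∀ y, ∃ r, y ∈ W r := fun y =>
    let ⟨k, hk, h⟩ := htrans p y (δ / 2) (by positivity)
    ⟨k, hW (by omega) h⟩
  -- closing a chain from `p` to near `y` by one from `y` back to `p` gives a cycle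
  have hdisj : ∀ {r s y}, y ∈ W r → y ∈ W s → r = s := by
    intro r s y hr hs
    obtain ⟨l, -, hl⟩ := htrans y p (δ / 2) (by positivity)
    have hr_add : ∀ {r}, y ∈ W r → r + l = 0 := by
      intro r hr
      obtain ⟨y', ⟨k, hk, rfl, hc⟩, hy'⟩ := mem_thickening_iff.mp hr
      have hy'y : dist y' y ≤ δ / 2 := by rw [dist_comm]; exact hy'.le
      have := hcycle (((HasChain.perturb_last hc hk y).mono (by linarith)).append
        (HasChain.mono hl (by linarith)))
      rwa [Nat.cast_add] at this
    exact add_right_cancel ((hr_add hr).trans (hr_add hs).symm)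
  have hclopen : IsClopen (W 0) := by
    refine ⟨isOpen_compl_iff.mp (isOpen_iff_forall_mem_open.mpr fun y hy => ?_),
      isOpen_thickening⟩
    obtain ⟨r, hr⟩ := hcover y
    exact ⟨W r, fun y' hy' h0 => hy (hdisj hy' h0 ▸ hr), isOpen_thickening, hr⟩
  have hp : p ∈ W 0 := by
    obtain ⟨k, hk, h⟩ := htrans p p (δ / 2) (by positivity)
    simpa [hcycle (HasChain.mono h (by linarith))] using hW (by omega) h
  have hfp : f p ∈ W 1 := by simpa using hW one_ne_zero (hasChain_iterate (by positivity) p 1)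
  have h10 : (1 : ZMod d) = 0 := hdisj hfp ((hclopen.eq_univ ⟨p, hp⟩).symm ▸ mem_univ (f p))
  exact ZMod.one_eq_zero_iff.mp h10

lemma exists_hasChain_self_of_ge (p : X) (hδ : 0 < δ) :
    ∃ N, ∀ n ≥ N, HasChain f δ n p p := by
  obtain ⟨N, hN⟩ := Nat.exists_mem_closure_of_ge (cycleLengths f δ p : Set ℕ)
  refine ⟨N, fun n hn => ?_⟩
  have := hN n hn (by rw [setGcd_cycleLengths htrans p hδ]; exact one_dvd n)
  rwa [AddSubmonoid.closure_eq] at this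

theorem isMixing_of_shadowsOn (hS : ShadowsOn f univ) : IsMixing f := by
  intro U V hU hV ⟨u, hu⟩ ⟨v, hv⟩
  obtain ⟨ε, hε, hεU, hεV⟩ : ∃ ε > 0, ball u ε ⊆ U ∧ ball v ε ⊆ V := by
    obtain ⟨εu, hεu, hbu⟩ := Metric.isOpen_iff.mp hU u hu
    obtain ⟨εv, hεv, hbv⟩ := Metric.isOpen_iff.mp hV v hv
    exact ⟨min εu εv, by positivity, (ball_subset_ball (min_le_left ..)).trans hbu,
      (ball_subset_ball (min_le_right ..)).trans hbv⟩
  obtain ⟨δ, hδ, hsh⟩ := hS (ε / 2) (by positivity)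
  obtain ⟨N, hN⟩ := exists_hasChain_self_of_ge htrans u hδ
  obtain ⟨B, -, huv⟩ := htrans u v δ hδ
  refine ⟨N + B, fun i hi => ?_⟩
  have hui : HasChain f δ i u v :=
    Nat.sub_add_cancel (by omega : B ≤ i) ▸ (hN (i - B) (by omega)).append huv
  obtain ⟨c, hc0, hci, hc⟩ := hui
  obtain ⟨x, hx⟩ := hsh i c (fun _ _ => mem_univ _) hc
  have hx0 := hx 0 i.zero_le
  have hxi := hx i le_rfl
  rw [hc0, iterate_zero_apply] at hx0
  rw [hci] at hxi
  refine ⟨f^[i] x, mem_image_of_mem _ (hεU ?_), hεV ?_⟩ <;>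
    rw [mem_ball, dist_comm] <;> linarith

end ChainMixing

theorem stmt11 [MetricSpace X] [CompactSpace X] [ConnectedSpace X] (f : X ≃ₜ X)
    (hL : LShadowsOn f Set.univ)
    (hint : (interior (ChainRec (⇑f))).Nonempty) :
    IsMixing (⇑f) :=
  isMixing_of_shadowsOn (hL.chainReach hint) hL.shadowsOn
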